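/- Let c ∈ ℝ⟨⟨X⟩⟩ be the series with ⟨c, ξ⟩ = 1 for every word ξ ∈ X*. Then for every word η ∈ X*, the antipode of the output feedback Hopf algebra satisfies (S a_{η x0})(c) = 0; equivalently, the coefficients of the antipode polynomial S a_{η x0} (as a polynomial in coordinate functions, evaluated as a character) sum to zero. -/

import Mathlib

open scoped TensorProduct

noncomputable section

namespace Paper

/-- Words over the alphabet `X = {x0, x1}`, encoded as lists over `Fin 2`
(`0` stands for the letter `x0` and `1` for the letter `x1`). -/
abbrev Word : Type := List (Fin 2)

/-- Formal power series `ℝ⟨⟨X⟩⟩`, given by their coefficient functions `η ↦ ⟨c,η⟩`. -/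
abbrev Series : Type := Word → ℝ

/-- The left shift `x_i⁻¹(c)`. -/
def lshift (i : Fin 2) (c : Series) : Series := fun w => c (i :: w)

/-- Left concatenation `x_i c` of the letter `x_i` onto every word of `c`. -/
def lconcat (i : Fin 2) (c : Series) : Series := fun w =>
  match w with
  | [] => 0
  | j :: v => if j = i then c v else 0

/-- Right concatenation `p x_i` of the letter `x_i` onto every word of `p`. -/
def rconcat {R : Type*} [Zero R] (i : Fin 2) (p : Word → R) : Word → R := fun w =>
  if w.getLast? = some i then p w.dropLast else 0

/-- The series of a single word. -/
def ind (η : Word) : Series := fun w => if w = η then 1 else 0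

/-- The empty word as a series, the unit `∅` (often written `1`). -/
def one : Series := ind []

/-- The shuffle product, defined coefficientwise by the recursion
`⟨c ⧢ d, ∅⟩ = ⟨c,∅⟩⟨d,∅⟩` and `⟨c ⧢ d, x_i w⟩ = ⟨x_i⁻¹(c) ⧢ d, w⟩ + ⟨c ⧢ x_i⁻¹(d), w⟩`,
which is the bilinear (and ultrametrically continuous) extension of the recursive
shuffle product of words. -/
def shuffleFn : Series → Series → Word → ℝ
  | c, d, [] => c [] * d []
  | c, d, i :: w => shuffleFn (lshift i c) d w + shuffleFn c (lshift i d) w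

/-- The shuffle product on `ℝ⟨⟨X⟩⟩`. -/
def sh (c d : Series) : Series := shuffleFn c d

/-- The map `φ_d(x_i)` for the modified composition product:
`φ_d(x0)(e) = x0 e` and `φ_d(x1)(e) = x1 e + x0 (d ⧢ e)`. -/
def phiLetter (d : Series) (i : Fin 2) (e : Series) : Series :=
  if i = 0 then lconcat 0 e else lconcat 1 e + lconcat 0 (sh d e)

/-- `φ_d(η)`, the algebra-homomorphism extension determined by
`φ_d(x_i η) = φ_d(x_i) ∘ φ_d(η)` and `φ_d(∅) = id`. -/
def phi (d : Series) : Word → Series → Series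
  | [], e => e
  | i :: η, e => phiLetter d i (phi d η e)

/-- The modified composition product `c ∘̃ d = Σ_η ⟨c,η⟩ φ_d(η)(1)`. -/
def mcomp (c d : Series) : Series := fun w => ∑' η : Word, c η * phi d η one w

/-- The map `ψ_d(x_i)` for the composition product:
`ψ_d(x0)(e) = x0 e` and `ψ_d(x1)(e) = x0 (d ⧢ e)`. -/
def psiLetter (d : Series) (i : Fin 2) (e : Series) : Series :=
  if i = 0 then lconcat 0 e else lconcat 0 (sh d e)

/-- `ψ_d(η)`, determined by `ψ_d(x_i η) = ψ_d(x_i) ∘ ψ_d(η)` and `ψ_d(∅) = id`. -/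
def psi (d : Series) : Word → Series → Series
  | [], e => e
  | i :: η, e => psiLetter d i (psi d η e)

/-- The composition product `c ∘ d = Σ_η ⟨c,η⟩ ψ_d(η)(1)`. -/
def comp (c d : Series) : Series := fun w => ∑' η : Word, c η * psi d η one w

/-- The group operation on `ℝ⟨⟨X_δ⟩⟩ = {δ + c}`, transported to the `c`-parts:
`c_δ ∘ d_δ = δ + (d + c ∘̃ d)`. -/
def gop (c d : Series) : Series := d + mcomp c d

/-- The Ferfera series `c = Σ_{k ≥ 0} k! x1^k`. -/
def ferfera : Series := fun w =>
  if w = List.replicate w.length (1 : Fin 2) then (Nat.factorial w.length : ℝ) else 0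

/-- The degree of a word, `deg(η) = 2|η|_{x0} + |η|_{x1} + 1`. -/
def degW (η : Word) : ℕ := 2 * η.count 0 + η.count 1 + 1

/-- The output feedback Hopf algebra `H`: the free unital commutative `ℝ`-algebra on the
coordinate functions `a_η`, realized as polynomials in commuting variables indexed by words. -/
abbrev H : Type := MvPolynomial Word ℝ

/-- The coordinate function `a_η`. -/
def aw (η : Word) : H := MvPolynomial.X η

/-- Character (pointwise) evaluation of elements of `H` at a series `c`:
`(a_{η₁} ⋯ a_{η_l})(c) = ⟨c,η₁⟩ ⋯ ⟨c,η_l⟩`, extended as an algebra map. -/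
def evalS (c : Series) : H →ₐ[ℝ] ℝ := MvPolynomial.aeval c

/-- Evaluation of `H ⊗ H` at a pair of series: `(p ⊗ q)(c,d) = p(c) q(d)`. -/
def evalPair (c d : Series) : H ⊗[ℝ] H →ₗ[ℝ] ℝ :=
  (LinearMap.mul' ℝ ℝ).comp (TensorProduct.map (evalS c).toLinearMap (evalS d).toLinearMap)

/-- The counit `ε` of `H`: `ε(a_η) = 0`, `ε(1) = 1`. -/
def counit : H →ₐ[ℝ] ℝ := evalS 0

/-- The defining property of the full coproduct `Δ` of the output feedback Hopf algebra:
`Δ a_η = Δ̃ a_η + 1 ⊗ a_η` where `Δ̃ a_η (c,d) = ⟨c ∘̃ d, η⟩`, i.e.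
`(Δ a_η)(c,d) = ⟨c ∘̃ d, η⟩ + ⟨d, η⟩` for all series `c, d`; `Δ` is an algebra morphism. -/
def IsFBCoproduct (Δ : H →ₐ[ℝ] (H ⊗[ℝ] H)) : Prop :=
  ∀ (η : Word) (c d : Series), evalPair c d (Δ (aw η)) = mcomp c d η + d η

/-- `S` is an antipode for the coproduct `Δ` (with counit `ε`):
`μ ∘ (S ⊗ id) ∘ Δ = 1·ε = μ ∘ (id ⊗ S) ∘ Δ`. -/
def IsAntipode (Δ : H →ₐ[ℝ] (H ⊗[ℝ] H)) (S : H →ₗ[ℝ] H) : Prop :=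
  (∀ p : H, LinearMap.mul' ℝ H (TensorProduct.map S LinearMap.id (Δ p)) = counit p • 1) ∧
  (∀ p : H, LinearMap.mul' ℝ H (TensorProduct.map LinearMap.id S (Δ p)) = counit p • 1)

/-- The right-augmentation operator `θ̃_i`, the derivation on `H` with `θ̃_i(a_η) = a_{η x_i}`. -/
def thetaR (i : Fin 2) : Derivation ℝ H H :=
  MvPolynomial.mkDerivation ℝ fun η => aw (η ++ [i])

/-- The left-augmentation operator `θ_i`, the derivation on `H` with `θ_i(a_η) = a_{x_i η}`. -/
def thetaL (i : Fin 2) : Derivation ℝ H H :=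
  MvPolynomial.mkDerivation ℝ fun η => aw (i :: η)

/-- The multiplication operator `κ_∅(h) = h · a_∅`. -/
def kappaE : H →ₗ[ℝ] H := LinearMap.mulRight ℝ (aw [])

/-- The shuffle coefficient `⟨ξ ⧢ ν, η⟩`. -/
def shCoeff (ξ ν η : Word) : ℝ := sh (ind ξ) (ind ν) η

/-- The finite set of words of length `n`. -/
def wordsLen (n : ℕ) : Finset Word :=
  (Finset.univ : Finset (Fin n → Fin 2)).image List.ofFn

/-- The deshuffle coproduct `Δ_⧢ a_η = Σ_{ξ,ν} ⟨ξ ⧢ ν, η⟩ a_ξ ⊗ a_ν`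
(the unique coproduct satisfying `Δ_⧢ a_∅ = a_∅ ⊗ a_∅` and the coderivation recursions
with respect to the augmentation operators). -/
def deshuffle (η : Word) : H ⊗[ℝ] H :=
  ∑ k ∈ Finset.range (η.length + 1), ∑ ξ ∈ wordsLen k, ∑ ν ∈ wordsLen (η.length - k),
    shCoeff ξ ν η • (aw ξ ⊗ₜ[ℝ] aw ν)

/-- Iterated integrals: `E_∅[u](t) = 1`, `E_{x_i η}[u](t) = ∫₀ᵗ u_i(s) E_η[u](s) ds`. -/
def E (u : Fin 2 → ℝ → ℝ) : Word → ℝ → ℝ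
  | [], _ => 1
  | i :: η, t => ∫ s in (0:ℝ)..t, u i s * E u η s

end Paper

/-!
Evaluating the antipode identity `μ (S ⊗ id) Δ a_w = ε(a_w)` at the all-ones series `c` gives
`1 + Σ_ξ ⟨φ_c(ξ)(1), w⟩ (S a_ξ)(c) = 0` for every word `w`. For this `c`, the right difference
`⟨e, w x0⟩ - ⟨e, w x1⟩` sends `φ_c(σ x0)(1)` to `φ_c(σ)(1)` and kills `φ_c(σ x1)(1)` and `1`, so
subtracting the equations for `w x0` and `w x1` leaves the homogeneous system
`Σ_σ ⟨φ_c(σ)(1), w⟩ (S a_{σ x0})(c) = 0`. Its matrix is unitriangular: the diagonal entries are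
`1`, and `⟨φ_c(σ)(1), w⟩ ≠ 0` forces `σ` to be shorter than `w`, or of the same length with a
letter `x0` only where `w` has one. Hence the only solution is zero.
-/

theorem eq_zero_of_unitriangular {α R : Type*} [NonAssocSemiring R] [TopologicalSpace R]
    {r : α → α → Prop} (hr : WellFounded r) {M : α → α → R} {f : α → R}
    (hdiag : ∀ a, M a a = 1) (hlower : ∀ a b, b ≠ a → M a b ≠ 0 → r b a)
    (hsys : ∀ a, ∑' b, M a b * f b = 0) (a : α) : f a = 0 := by
  induction a using hr.induction with
  | _ a ih =>
    have hoff : ∀ b ≠ a, M a b * f b = 0 := fun b hb => by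
      by_cases hM : M a b = 0
      · rw [hM, zero_mul]
      · rw [ih b (hlower a b hb hM), mul_zero]
    simpa [tsum_eq_single a hoff, hdiag] using hsys a

namespace Paper

lemma mem_wordsLen {ξ : Word} {k : ℕ} : ξ ∈ wordsLen k ↔ ξ.length = k := by
  constructor
  · intro h
    obtain ⟨f, -, rfl⟩ := Finset.mem_image.mp h
    simp
  · rintro rfl
    exact Finset.mem_image.mpr ⟨ξ.get, Finset.mem_univ _, List.ofFn_get ξ⟩

def wordsUpTo (n : ℕ) : Finset Word := (Finset.range (n + 1)).biUnion wordsLen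

lemma mem_wordsUpTo {ξ : Word} {n : ℕ} : ξ ∈ wordsUpTo n ↔ ξ.length ≤ n := by
  simp [wordsUpTo, mem_wordsLen]

def VanishesBelow (k : ℕ) (e : Series) : Prop := ∀ u : Word, u.length < k → e u = 0

lemma VanishesBelow.sh {k : ℕ} {e : Series} (he : VanishesBelow k e) (c : Series) :
    VanishesBelow k (sh c e) := by
  intro w hw
  induction w generalizing c e k with
  | nil => simp [Paper.sh, shuffleFn, he [] hw]
  | cons i v ih =>
    obtain ⟨k, rfl⟩ : ∃ m, k = m + 1 := ⟨k - 1, by simp at hw; omega⟩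
    have hshift : VanishesBelow k (lshift i e) := fun u hu => he (i :: u) (by simpa using hu)
    have h1 := ih he (lshift i c) (by simp at hw; omega)
    have h2 := ih hshift c (by simpa using hw)
    simp only [Paper.sh] at h1 h2 ⊢
    rw [shuffleFn, h1, h2, add_zero]

lemma sh_apply_of_vanishesBelow {e : Series} (c : Series) (w : Word)
    (he : VanishesBelow w.length e) : sh c e w = c [] * e w := by
  induction w generalizing e with
  | nil => rfl
  | cons i v ih =>
    have h1 : sh (lshift i c) e v = 0 := he.sh _ v (by simp)
    have h2 := ih (e := lshift i e) fun u hu => he (i :: u) (by simpa using hu)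
    simp only [Paper.sh] at h1 h2 ⊢
    rw [shuffleFn, h1, h2, zero_add, lshift]

lemma shuffleFn_sub_right (c e e' : Series) (w : Word) :
    shuffleFn c (e - e') w = shuffleFn c e w - shuffleFn c e' w := by
  induction w generalizing c e e' with
  | nil => simp [shuffleFn, mul_sub]
  | cons i v ih =>
    simp only [shuffleFn, ih]
    rw [show lshift i (e - e') = lshift i e - lshift i e' from rfl, ih]
    ring

lemma sh_zero_right (c : Series) : sh c 0 = 0 := by
  funext w
  simpa [Paper.sh] using shuffleFn_sub_right c 0 0 w

def rshift (i : Fin 2) : Series →ₗ[ℝ] Series := LinearMap.funLeft ℝ ℝ (· ++ [i])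

lemma shuffleFn_append_singleton (c e : Series) (i : Fin 2) (w : Word) :
    shuffleFn c e (w ++ [i]) = shuffleFn (rshift i c) e w + shuffleFn c (rshift i e) w := by
  induction w generalizing c e with
  | nil => rfl
  | cons j v ih =>
    simp only [List.cons_append, shuffleFn, ih]
    exact add_add_add_comm _ _ _ _

lemma VanishesBelow.phi {k : ℕ} {e : Series} (he : VanishesBelow k e) (d : Series) (ξ : Word) :
    VanishesBelow (k + ξ.length) (phi d ξ e) := by
  induction ξ with
  | nil => simpa [Paper.phi] using he
  | cons i σ ih =>
    rintro (_ | ⟨j, v⟩) hw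
    · fin_cases i <;> simp [Paper.phi, phiLetter, lconcat]
    · have hv : v.length < k + σ.length := by simp at hw; omega
      fin_cases i <;> simp [Paper.phi, phiLetter, lconcat, ih v hv, ih.sh d v hv]

lemma vanishesBelow_phi_one (d : Series) (ξ : Word) : VanishesBelow ξ.length (phi d ξ one) := by
  simpa using VanishesBelow.phi (k := 0) (fun _ hu => absurd hu (Nat.not_lt_zero _)) d ξ

lemma phi_one_nil (d : Series) (ξ : Word) : phi d ξ one [] = if ξ = [] then 1 else 0 := by
  rcases ξ with _ | ⟨i, σ⟩
  · simp [phi, one, ind]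
  · simpa using vanishesBelow_phi_one d (i :: σ) [] (by simp)

lemma mcomp_eq_sum (c d : Series) (w : Word) :
    mcomp c d w = ∑ ξ ∈ wordsUpTo w.length, c ξ * phi d ξ one w := by
  refine tsum_eq_sum fun ξ hξ => ?_
  rw [vanishesBelow_phi_one d ξ w (by simpa [mem_wordsUpTo] using hξ), mul_zero]

def allOnes : Series := fun _ => 1

def rdiff : Series →ₗ[ℝ] Series := rshift 0 - rshift 1

lemma rdiff_apply (e : Series) (w : Word) : rdiff e w = e (w ++ [0]) - e (w ++ [1]) := rfl

lemma rdiff_one : rdiff one = 0 := by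
  funext w
  simp [rdiff_apply, one, ind]

lemma rdiff_lconcat (i : Fin 2) (e : Series) :
    rdiff (lconcat i e) = lconcat i (rdiff e) + (if i = 0 then e [] else -e []) • one := by
  funext w
  rcases w with _ | ⟨j, v⟩ <;> fin_cases i <;> simp [rdiff_apply, lconcat, one, ind] <;>
    split_ifs <;> simp

lemma sh_allOnes_nil (e : Series) : sh allOnes e [] = e [] := by
  simp [Paper.sh, shuffleFn, allOnes]

lemma rdiff_sh_allOnes (e : Series) : rdiff (sh allOnes e) = sh allOnes (rdiff e) := by
  funext w
  have hshift (i : Fin 2) : rshift i allOnes = allOnes := rfl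
  simp only [rdiff_apply, Paper.sh, shuffleFn_append_singleton, hshift]
  rw [show rdiff e = rshift 0 e - rshift 1 e from rfl, shuffleFn_sub_right]
  ring

lemma phiLetter_zero (d : Series) (i : Fin 2) : phiLetter d i 0 = 0 := by
  funext w
  rcases w with _ | ⟨j, v⟩ <;> fin_cases i <;> simp [phiLetter, lconcat, sh_zero_right]

lemma rdiff_phiLetter_allOnes (i : Fin 2) (e : Series) :
    rdiff (phiLetter allOnes i e) =
      phiLetter allOnes i (rdiff e) + (if i = 0 then e [] else 0) • one := by
  fin_cases i
  · simp [phiLetter, rdiff_lconcat]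
  · simp [phiLetter, rdiff_lconcat, rdiff_sh_allOnes, sh_allOnes_nil]
    abel

lemma rdiff_phi_allOnes_append (σ : Word) (i : Fin 2) :
    rdiff (phi allOnes (σ ++ [i]) one) = if i = 0 then phi allOnes σ one else 0 := by
  induction σ with
  | nil =>
    simp only [List.nil_append, Paper.phi, rdiff_phiLetter_allOnes, rdiff_one, phiLetter_zero]
    fin_cases i <;> simp [one, ind]
  | cons j τ ih =>
    have hnil : phi allOnes (τ ++ [i]) one [] = 0 := by rw [phi_one_nil, if_neg (by simp)]
    rw [List.cons_append, Paper.phi, rdiff_phiLetter_allOnes, ih, hnil]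
    split_ifs <;> simp [Paper.phi, phiLetter_zero]

lemma phi_allOnes_cons_apply_cons {σ v : Word} (h : σ.length = v.length) (i j : Fin 2) :
    phi allOnes (i :: σ) one (j :: v) = if j ≤ i then phi allOnes σ one v else 0 := by
  have hsh : sh allOnes (phi allOnes σ one) v = phi allOnes σ one v := by
    rw [sh_apply_of_vanishesBelow _ _ (h ▸ vanishesBelow_phi_one _ σ), allOnes, one_mul]
  fin_cases i <;> fin_cases j <;> simp [Paper.phi, phiLetter, lconcat, hsh]

lemma phi_allOnes_apply_self (w : Word) : phi allOnes w one w = 1 := by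
  induction w with
  | nil => simp [Paper.phi, one, ind]
  | cons i v ih => rw [phi_allOnes_cons_apply_cons rfl, if_pos le_rfl, ih]

lemma forall₂_le_of_phi_allOnes_ne_zero {ξ w : Word} (h : ξ.length = w.length)
    (hne : phi allOnes ξ one w ≠ 0) : List.Forall₂ (· ≤ ·) w ξ := by
  induction ξ generalizing w with
  | nil =>
    obtain rfl := List.length_eq_zero_iff.mp h.symm
    exact .nil
  | cons i σ ih =>
    rcases w with _ | ⟨j, v⟩
    · simp at h
    · have hσv : σ.length = v.length := by simpa using h
      rw [phi_allOnes_cons_apply_cons hσv] at hne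
      split_ifs at hne with hji
      · exact .cons hji (ih hσv hne)
      · exact absurd rfl hne

lemma count_zero_lt_of_forall₂_le {w ξ : Word} (h : List.Forall₂ (· ≤ ·) w ξ) (hne : w ≠ ξ) :
    ξ.count 0 < w.count 0 := by
  induction h with
  | nil => exact absurd rfl hne
  | @cons j i v σ hji _ ih =>
    by_cases hvσ : v = σ
    · subst hvσ
      have hji' : j ≠ i := fun h => hne (by rw [h])
      fin_cases i <;> fin_cases j <;> simp_all
    · have hcount := ih hvσ
      have hzero : i = 0 → j = 0 := fun hi => Fin.le_zero_iff.mp (hi ▸ hji)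
      simp only [List.count_cons, beq_iff_eq]
      split_ifs <;> omega

lemma lengthCount_lt_of_phi_allOnes_ne_zero {σ w : Word} (hne : σ ≠ w)
    (h : phi allOnes σ one w ≠ 0) :
    toLex (σ.length, σ.count 0) < toLex (w.length, w.count 0) := by
  rw [Prod.Lex.toLex_lt_toLex]
  rcases lt_trichotomy σ.length w.length with hlt | heq | hgt
  · exact .inl hlt
  · exact .inr ⟨heq,
      count_zero_lt_of_forall₂_le (forall₂_le_of_phi_allOnes_ne_zero heq h) hne.symm⟩
  · exact absurd (vanishesBelow_phi_one _ σ w hgt) h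

lemma tsum_phi_allOnes_mul_append_zero_eq_zero {f : Series}
    (hf : ∀ w : Word, 1 + ∑ ξ ∈ wordsUpTo w.length, phi allOnes ξ one w * f ξ = 0) (w : Word) :
    ∑' σ, phi allOnes σ one w * f (σ ++ [0]) = 0 := by
  have hsupp : Function.support (fun ξ => rdiff (phi allOnes ξ one) w * f ξ) ⊆
      Set.range (· ++ [(0 : Fin 2)]) := by
    intro ξ hξ
    rcases List.eq_nil_or_concat ξ with rfl | ⟨σ, i, rfl⟩
    · simp [Paper.phi, rdiff_one] at hξ
    · fin_cases i
      · exact ⟨σ, (List.concat_eq_append ..).symm⟩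
      · simp [rdiff_phi_allOnes_append] at hξ
  have hout : ∀ ξ ∉ wordsUpTo (w.length + 1), rdiff (phi allOnes ξ one) w * f ξ = 0 := by
    intro ξ hξ
    have hlt : w.length + 1 < ξ.length := by simpa [mem_wordsUpTo] using hξ
    have hvan (i : Fin 2) : phi allOnes ξ one (w ++ [i]) = 0 :=
      vanishesBelow_phi_one allOnes ξ _ (by simpa using hlt)
    simp [rdiff_apply, hvan]
  calc ∑' σ, phi allOnes σ one w * f (σ ++ [0])
      = ∑' σ, rdiff (phi allOnes (σ ++ [0]) one) w * f (σ ++ [0]) := by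
        simp [rdiff_phi_allOnes_append]
    _ = ∑' ξ, rdiff (phi allOnes ξ one) w * f ξ := (List.append_left_injective [0]).tsum_eq hsupp
    _ = ∑ ξ ∈ wordsUpTo (w.length + 1), rdiff (phi allOnes ξ one) w * f ξ := tsum_eq_sum hout
    _ = 0 := by
      have h0 := hf (w ++ [0])
      have h1 := hf (w ++ [1])
      simp only [List.length_append, List.length_singleton] at h0 h1
      simp only [rdiff_apply, sub_mul, Finset.sum_sub_distrib]
      linarith

theorem append_zero_eq_zero_of_sum_phi_allOnes {f : Series}
    (hf : ∀ w : Word, 1 + ∑ ξ ∈ wordsUpTo w.length, phi allOnes ξ one w * f ξ = 0) (σ : Word) :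
    f (σ ++ [0]) = 0 :=
  eq_zero_of_unitriangular (r := InvImage (· < ·) fun w : Word => toLex (w.length, w.count 0))
    (InvImage.wf _ wellFounded_lt) (M := fun w σ => phi allOnes σ one w)
    phi_allOnes_apply_self (fun _ _ => lengthCount_lt_of_phi_allOnes_ne_zero)
    (tsum_phi_allOnes_mul_append_zero_eq_zero hf) σ

def evalRight (d : Series) : H ⊗[ℝ] H →ₗ[ℝ] H :=
  (TensorProduct.rid ℝ H).toLinearMap ∘ₗ TensorProduct.map LinearMap.id (evalS d).toLinearMap

lemma evalRight_tmul (d : Series) (p q : H) : evalRight d (p ⊗ₜ q) = evalS d q • p := by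
  simp [evalRight]

lemma evalS_evalRight (c d : Series) (x : H ⊗[ℝ] H) :
    evalS c (evalRight d x) = evalPair c d x := by
  induction x using TensorProduct.induction_on with
  | zero => simp
  | tmul p q => simp [evalRight_tmul, evalPair, mul_comm]
  | add x y hx hy => simp [hx, hy]

section Antipode

variable {Δ : H →ₐ[ℝ] H ⊗[ℝ] H} {S : H →ₗ[ℝ] H}

lemma evalS_mul'_map_id (d : Series) (x : H ⊗[ℝ] H) :
    evalS d (LinearMap.mul' ℝ H (TensorProduct.map S LinearMap.id x)) =
      evalS d (S (evalRight d x)) := by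
  induction x using TensorProduct.induction_on with
  | zero => simp
  | tmul p q => simp [evalRight_tmul, mul_comm]
  | add x y hx hy => simp [hx, hy]

lemma evalRight_coproduct_aw (hΔ : IsFBCoproduct Δ) (d : Series) (w : Word) :
    evalRight d (Δ (aw w)) = d w • 1 + ∑ ξ ∈ wordsUpTo w.length, phi d ξ one w • aw ξ := by
  refine MvPolynomial.funext fun c => ?_
  change evalS c _ = evalS c _
  rw [evalS_evalRight, hΔ w c d, mcomp_eq_sum, add_comm]
  simp [aw, evalS, mul_comm]

lemma antipode_map_one (hS : IsAntipode Δ S) : S 1 = 1 := by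
  simpa [Algebra.TensorProduct.one_def] using hS.1 1

theorem add_sum_phi_mul_evalS_antipode_eq_zero (hΔ : IsFBCoproduct Δ) (hS : IsAntipode Δ S)
    (d : Series) (w : Word) :
    d w + ∑ ξ ∈ wordsUpTo w.length, phi d ξ one w * evalS d (S (aw ξ)) = 0 := by
  have h := congrArg (evalS d) (hS.1 (aw w))
  rw [evalS_mul'_map_id, evalRight_coproduct_aw hΔ] at h
  simpa [antipode_map_one hS, counit, evalS, aw] using h

end Antipode

end Paper

open Paper in
/-- Let `c ∈ ℝ⟨⟨X⟩⟩` be the series with `⟨c, ξ⟩ = 1` for every word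
`ξ ∈ X*`.  Then for every word `η ∈ X*`, the antipode of the output feedback Hopf algebra
satisfies `(S a_{η x0})(c) = 0`; equivalently, the coefficients of the antipode polynomial
`S a_{η x0}` sum to zero. -/
theorem antipode_coefficients_sum_zero
    (Δ : H →ₐ[ℝ] (H ⊗[ℝ] H)) (hΔ : IsFBCoproduct Δ)
    (S : H →ₗ[ℝ] H) (hS : IsAntipode Δ S) :
    ∀ η : Word, evalS (fun _ => 1) (S (aw (η ++ [0]))) = 0 :=
  append_zero_eq_zero_of_sum_phi_allOnes fun w => by
    simpa [allOnes] using add_sum_phi_mul_evalS_antipode_eq_zero hΔ hS allOnes w
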